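/- Let X be a random vector in ℝ^n with distribution P_X, N = {1,…,n}, and let h be a linear game value with coefficients w_i(S,N), i.e. h_i[N,v] = Σ_{S⊆N∖{i}} w_i(S,N)(v(S∪{i}) − v(S)). If f belongs to (an equivalence class in) L^1(P̃_X), then for P_X-almost every x* ∈ ℝ^n the marginal game v^{ME}(S; x*, X, f) = E[f(x*_S, X_{-S})] is well-defined (finite) for every S ⊆ N, and hence the marginal game value h_i[N, v^{ME}(·; x*, X, f)] is well-defined for every i ∈ N. -/

import Mathlib

open MeasureTheory ProbabilityTheory ENNReal Filter Finset

noncomputable section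

/-- Discrete σ-algebra on the (finite) space of coalitions. -/
instance {k : ℕ} : MeasurableSpace (Finset (Fin k)) := ⊤

/-- `merge n S y x` is the vector in `ℝ^n` agreeing with `y` on `S` and with `x` on `N∖S`,
i.e. the vector `(y_S, x_{-S})`. -/
def merge (n : ℕ) (S : Finset (Fin n)) (y x : Fin n → ℝ) : Fin n → ℝ :=
  fun i => if i ∈ S then y i else x i

/-- The product measure `P_{X_S} ⊗ P_{X_{-S}}` viewed as a measure on `ℝ^n`
(obtained by merging two independent copies along `S`). -/
def prodPart (n : ℕ) (P : Measure (Fin n → ℝ)) (S : Finset (Fin n)) :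
    Measure (Fin n → ℝ) :=
  (P.prod P).map (fun q => merge n S q.1 q.2)

/-- The mixture measure `P̃_X = 2^{-n} ∑_{S ⊆ N} P_{X_S} ⊗ P_{X_{-S}}` on `ℝ^n`. -/
def tildeP (n : ℕ) (P : Measure (Fin n → ℝ)) : Measure (Fin n → ℝ) :=
  ((2 : ℝ≥0∞) ^ n)⁻¹ • ∑ S : Finset (Fin n), prodPart n P S

/-- The marginal game `v^{ME}(S; x*, X, f) = E[f(x*_S, X_{-S})]`. -/
def vME (n : ℕ) (P : Measure (Fin n → ℝ)) (f : (Fin n → ℝ) → ℝ)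
    (xs : Fin n → ℝ) (S : Finset (Fin n)) : ℝ :=
  ∫ x, f (merge n S xs x) ∂P

/-- A linear game value `h_i[N,v] = ∑_{S ⊆ N∖{i}} w(S) (v(S∪{i}) - v(S))`. -/
def gameValue (n : ℕ) (w : Finset (Fin n) → ℝ) (i : Fin n)
    (v : Finset (Fin n) → ℝ) : ℝ :=
  ∑ S ∈ (univ.erase i).powerset, w S * (v (insert i S) - v S)

/-- The discrete measure on subsets of `D` assigning mass `w T` to each `T ⊆ D`.
For `D = N∖{i}` and nonnegative weights summing to one this is `P_i^{(h)}`. -/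
def subsetMeasure (k : ℕ) (D : Finset (Fin k)) (w : Finset (Fin k) → ℝ) :
    Measure (Finset (Fin k)) :=
  ∑ T ∈ D.powerset, (ENNReal.ofReal (w T)) • Measure.dirac T

/-- `Δ_i(S, x; x*, f) = f(x*_{S∪{i}}, x_{-(S∪{i})}) - f(x*_S, x_{-S})`. -/
def deltaFun (n : ℕ) (f : (Fin n → ℝ) → ℝ) (i : Fin n) (xs : Fin n → ℝ) :
    Finset (Fin n) × (Fin n → ℝ) → ℝ :=
  fun q => f (merge n (insert i q.1) xs q.2) - f (merge n q.1 xs q.2)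

/-! Each `prodPart n P S` is dominated by `2 ^ n • tildeP n P`, so `f` is integrable against
`P ⊗ P` after merging along `S`; by Fubini the section `x ↦ f (merge n S xs x)` is then
`P`-integrable for `P`-a.e. `xs`, and there are only finitely many coalitions `S`. Once the
marginal game is finite, the game value is just its unfolded definition. -/

section

variable {n : ℕ}

theorem measurable_merge (S : Finset (Fin n)) :
    Measurable fun q : (Fin n → ℝ) × (Fin n → ℝ) => merge n S q.1 q.2 := by
  refine measurable_pi_lambda _ fun i => ?_
  by_cases hi : i ∈ S <;> simp only [merge, hi, if_true, if_false] <;> fun_prop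

theorem prodPart_le_sum_prodPart (P : Measure (Fin n → ℝ)) (S : Finset (Fin n)) :
    prodPart n P S ≤ ∑ T : Finset (Fin n), prodPart n P T :=
  Finset.single_le_sum (f := prodPart n P) (fun _ _ => Measure.zero_le _) (mem_univ S)

theorem two_pow_smul_tildeP (P : Measure (Fin n → ℝ)) :
    (2 : ℝ≥0∞) ^ n • tildeP n P = ∑ T : Finset (Fin n), prodPart n P T := by
  rw [tildeP, smul_smul, ENNReal.mul_inv_cancel (pow_ne_zero _ two_ne_zero)
    (pow_ne_top ofNat_ne_top), one_smul]

theorem integrable_prodPart_of_integrable_tildeP {P : Measure (Fin n → ℝ)} {f : (Fin n → ℝ) → ℝ}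
    (hf : Integrable f (tildeP n P)) (S : Finset (Fin n)) : Integrable f (prodPart n P S) := by
  refine (hf.smul_measure (pow_ne_top ofNat_ne_top : (2 : ℝ≥0∞) ^ n ≠ ∞)).mono_measure ?_
  rw [two_pow_smul_tildeP]
  exact prodPart_le_sum_prodPart P S

theorem ae_integrable_merge_of_integrable_prodPart {P : Measure (Fin n → ℝ)} [SFinite P]
    {f : (Fin n → ℝ) → ℝ} {S : Finset (Fin n)} (hf : Integrable f (prodPart n P S)) :
    ∀ᵐ xs ∂P, Integrable (fun x => f (merge n S xs x)) P :=
  ((integrable_map_measure hf.1 (measurable_merge S).aemeasurable).mp hf).prod_right_ae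

end

/-- Well-definedness of the marginal game and marginal game values.
If `f ∈ L^1(P̃_X)`, then for `P_X`-almost every `x*` the marginal game
`v^{ME}(S; x*, X, f) = E[f(x*_S, X_{-S})]` is well-defined (the integrand is integrable)
for every `S ⊆ N`, and hence the linear game value
`h_i[N, v^{ME}(·; x*, X, f)] = ∑_{S ⊆ N∖{i}} w_i(S,N)(v^{ME}(S∪{i}) - v^{ME}(S))`
is well-defined for every `i ∈ N`. -/
theorem stmt1 (n : ℕ) (P : Measure (Fin n → ℝ)) [IsProbabilityMeasure P]
    (f : (Fin n → ℝ) → ℝ) (hf : MemLp f 1 (tildeP n P))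
    (w : Fin n → Finset (Fin n) → ℝ) :
    ∀ᵐ xs ∂P,
      (∀ S : Finset (Fin n), Integrable (fun x => f (merge n S xs x)) P) ∧
      (∀ i : Fin n, gameValue n (w i) i (vME n P f xs) =
        ∑ S ∈ (univ.erase i).powerset,
          w i S * ((∫ x, f (merge n (insert i S) xs x) ∂P) -
                   ∫ x, f (merge n S xs x) ∂P)) := by
  have hint : Integrable f (tildeP n P) := memLp_one_iff_integrable.mp hf
  have hmerge : ∀ S, ∀ᵐ xs ∂P, Integrable (fun x => f (merge n S xs x)) P := fun S =>
    ae_integrable_merge_of_integrable_prodPart (integrable_prodPart_of_integrable_tildeP hint S)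
  filter_upwards [ae_all_iff.mpr hmerge] with xs hxs
  exact ⟨hxs, fun i => rfl⟩
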